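/- arXiv:2312.15539 — 3 statements merged into one kernel-verified Lean document; each statement's English description precedes it below -/
import Mathlib

section
/- (Abstract orthotropic Orlicz stability.) Let φ be an N-function such that both φ and its complementary function φ* satisfy the Δ₂-condition with constant D. Let T ⊆ N ⊂ ℝ^d be measurable sets with 0 < |T| ≤ |N| < ∞. Let g, f : ℝ^d → ℝ be measurable with f integrable on N and g integrable on T, and suppose: (i) there is M > 0 with |g(x)| ≤ M ⨍_T |g| dz for almost every x ∈ T (an inverse estimate, valid e.g. when g is a polynomial of fixed degree on a shape-regular cell); and (ii) ⨍_T |g| dx ≤ M' ⨍_N |f| dx. Then there is a constant C, depending only on D, M, M' (and in particular independent of the shift a), such that for all a ≥ 0: ⨍_T φ_a(|g|) dx ≤ C ⨍_N φ_a(|f|) dx, where φ_a is the shifted N-function and ⨍ denotes the average integral. -/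
open MeasureTheory

/-- An N-function `Φ` with derivative `Φ'`: differentiable on `[0,∞)` with
`Φ(0) = 0`, `Φ(t) = ∫₀ᵗ Φ'(s) ds`, `Φ'` nondecreasing, right-continuous,
`Φ'(0) = 0` and `Φ'(t) > 0` for `t > 0`. -/
structure IsNFunction (Φ Φ' : ℝ → ℝ) : Prop where
  map_zero : Φ 0 = 0
  eq_integral : ∀ t : ℝ, 0 ≤ t → Φ t = ∫ s in (0:ℝ)..t, Φ' s
  deriv_zero : Φ' 0 = 0
  deriv_pos : ∀ t : ℝ, 0 < t → 0 < Φ' t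
  deriv_mono : MonotoneOn Φ' (Set.Ici 0)
  deriv_rightCont : ∀ t : ℝ, 0 ≤ t → ContinuousWithinAt Φ' (Set.Ici t) t

/-- The Δ₂-condition with constant `D`. -/
def Delta2 (Φ : ℝ → ℝ) (D : ℝ) : Prop := ∀ t : ℝ, 0 < t → Φ (2 * t) ≤ D * Φ t

/-- Derivative of the shifted N-function: `Φ_a'(t) = (t/(a+t)) Φ'(a+t)`. -/
noncomputable def shiftDeriv (Φ' : ℝ → ℝ) (a t : ℝ) : ℝ := t / (a + t) * Φ' (a + t)

/-- The shifted N-function `Φ_a(t) = ∫₀ᵗ (s/(a+s)) Φ'(a+s) ds`. -/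
noncomputable def shiftN (Φ' : ℝ → ℝ) (a t : ℝ) : ℝ := ∫ s in (0:ℝ)..t, shiftDeriv Φ' a s

/-- The (generalized) inverse `(Φ')⁻¹(t) = sup {s ≥ 0 : Φ'(s) ≤ t}`. -/
noncomputable def invDeriv (Φ' : ℝ → ℝ) (t : ℝ) : ℝ := sSup {s : ℝ | 0 ≤ s ∧ Φ' s ≤ t}

/-- The complementary N-function `Φ*(t) = ∫₀ᵗ (Φ')⁻¹(s) ds`. -/
noncomputable def complementary (Φ' : ℝ → ℝ) (t : ℝ) : ℝ := ∫ s in (0:ℝ)..t, invDeriv Φ' s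

/-!
The inverse estimate and the comparison of means give `|g| ≤ M M' m` a.e. on `T`, where
`m = ⨍_N |f|`. The shifted functions `φ_a` satisfy the Δ₂-condition with the constant `4 D⁴`,
uniformly in `a`: both `φ_a(2t)` and `φ_a(t)` are comparable to `t² φ'((a+t)/2) / (a+t)`,
because `φ'` is doubling with constant `D²/2`. Iterating gives `φ_a(|g|) ≤ (4 D⁴)ⁿ φ_a(m)`
a.e. on `T`, where `2ⁿ > M M'`. Finally `φ_a` is convex, and integrating its supporting line
at `m` over `N` is Jensen's inequality `φ_a(m) ≤ ⨍_N φ_a(|f|)`, valid also when the right-hand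
side is infinite.
-/

open Set

section MonotonePrimitive

variable {h : ℝ → ℝ}

theorem MonotoneOn.intervalIntegrable_of_nonneg (hm : MonotoneOn h (Ici 0)) {x y : ℝ}
    (hx : 0 ≤ x) (hy : 0 ≤ y) : IntervalIntegrable h volume x y :=
  (hm.mono fun _ hz => le_trans (le_inf hx hy) hz.1).intervalIntegrable

theorem MonotoneOn.integral_le_mul (hm : MonotoneOn h (Ici 0)) {t : ℝ} (ht : 0 ≤ t) :
    ∫ s in (0:ℝ)..t, h s ≤ t * h t := by
  simpa using intervalIntegral.integral_mono_on ht (hm.intervalIntegrable_of_nonneg le_rfl ht)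
    intervalIntegrable_const fun x hx => hm hx.1 ht hx.2

theorem MonotoneOn.integral_add_sub_mul_le (hm : MonotoneOn h (Ici 0)) {b t : ℝ} (hb : 0 ≤ b)
    (ht : 0 ≤ t) : (∫ s in (0:ℝ)..b, h s) + (t - b) * h b ≤ ∫ s in (0:ℝ)..t, h s := by
  rw [← intervalIntegral.integral_add_adjacent_intervals
    (hm.intervalIntegrable_of_nonneg le_rfl hb) (hm.intervalIntegrable_of_nonneg hb ht),
    add_le_add_iff_left]
  rcases le_total b t with hbt | htb
  · simpa using intervalIntegral.integral_mono_on hbt intervalIntegrable_const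
      (hm.intervalIntegrable_of_nonneg hb ht) fun x hx => hm hb (hb.trans hx.1) hx.1
  · have := intervalIntegral.integral_mono_on htb (hm.intervalIntegrable_of_nonneg ht hb)
      intervalIntegrable_const fun x hx => hm (ht.trans hx.1) hb hx.2
    rw [intervalIntegral.integral_symm]
    simp only [intervalIntegral.integral_const, smul_eq_mul] at this
    linarith

theorem MonotoneOn.sub_mul_le_integral (hm : MonotoneOn h (Ici 0)) (h0 : 0 ≤ h 0) {b t : ℝ}
    (hb : 0 ≤ b) (hbt : b ≤ t) : (t - b) * h b ≤ ∫ s in (0:ℝ)..t, h s := by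
  have hint : 0 ≤ ∫ s in (0:ℝ)..b, h s :=
    intervalIntegral.integral_nonneg hb fun u hu => h0.trans (hm self_mem_Ici hu.1 hu.1)
  linarith [hm.integral_add_sub_mul_le hb (hb.trans hbt)]

end MonotonePrimitive

theorem Delta2.le_pow_mul {F : ℝ → ℝ} {C : ℝ} (hF : Delta2 F C) (hC : 0 ≤ C)
    (hmono : MonotoneOn F (Ici 0)) (n : ℕ) {s t : ℝ} (hs : 0 ≤ s) (hst : s ≤ 2 ^ n * t)
    (ht : 0 < t) : F s ≤ C ^ n * F t := by
  have hpow : ∀ k : ℕ, F (2 ^ k * t) ≤ C ^ k * F t := by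
    intro k
    induction k with
    | zero => simp
    | succ k ih =>
      calc F (2 ^ (k + 1) * t) = F (2 * (2 ^ k * t)) := by rw [pow_succ', mul_assoc]
        _ ≤ C * F (2 ^ k * t) := hF _ (by positivity)
        _ ≤ C * (C ^ k * F t) := by gcongr
        _ = C ^ (k + 1) * F t := by ring
  exact (hmono hs (by positivity : (0:ℝ) ≤ 2 ^ n * t) hst).trans (hpow n)

theorem ofReal_integral_le_lintegral_ofReal {α : Type*} [MeasurableSpace α] {μ : Measure α}
    (f : α → ℝ) : ENNReal.ofReal (∫ x, f x ∂μ) ≤ ∫⁻ x, ENNReal.ofReal (f x) ∂μ := by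
  by_cases hf : Integrable f μ
  · refine le_trans (ENNReal.ofReal_le_ofReal ?_) ENNReal.ofReal_toReal_le
    rw [integral_eq_lintegral_pos_part_sub_lintegral_neg_part hf]
    exact sub_le_self _ ENNReal.toReal_nonneg
  · simp [integral_undef hf]

theorem setLIntegral_ofReal_div_le_of_ae_le {α : Type*} [MeasurableSpace α] {μ : Measure α}
    {T : Set α} {u : α → ℝ} {K : ℝ} (hu : ∀ᵐ x ∂μ.restrict T, u x ≤ K) :
    (∫⁻ x in T, ENNReal.ofReal (u x) ∂μ) / μ T ≤ ENNReal.ofReal K := by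
  refine ENNReal.div_le_of_le_mul ?_
  rw [← setLIntegral_const]
  exact lintegral_mono_ae (hu.mono fun x hx => ENNReal.ofReal_le_ofReal hx)

theorem ofReal_mul_measure_le_setLIntegral_of_supportingLine {α : Type*} [MeasurableSpace α]
    {μ : Measure α} {N : Set α} {f : α → ℝ} {F : ℝ → ℝ} {m c : ℝ}
    (hF : ∀ t, 0 ≤ t → F m + (t - m) * c ≤ F t) (hc : 0 ≤ c) (hN : μ N ≠ ⊤)
    (hf : IntegrableOn f N μ) (hm : m * μ.real N ≤ ∫ x in N, |f x| ∂μ) :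
    ENNReal.ofReal (F m) * μ N ≤ ∫⁻ x in N, ENNReal.ofReal (F |f x|) ∂μ := by
  have : IsFiniteMeasure (μ.restrict N) := isFiniteMeasure_restrict.2 hN
  have hline : ∫ x in N, (F m + (|f x| - m) * c) ∂μ =
      F m * μ.real N + (∫ x in N, |f x| ∂μ - m * μ.real N) * c := by
    have hdev : Integrable (fun x => |f x| - m) (μ.restrict N) := hf.abs.sub (integrable_const m)
    rw [integral_add (integrable_const _) (hdev.mul_const c), integral_mul_const,
      integral_sub hf.abs (integrable_const m), setIntegral_const, setIntegral_const, smul_eq_mul,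
      smul_eq_mul]
    ring
  calc ENNReal.ofReal (F m) * μ N = ENNReal.ofReal (F m * μ.real N) := by
        rw [ENNReal.ofReal_mul' measureReal_nonneg, ofReal_measureReal hN]
    _ ≤ ENNReal.ofReal (∫ x in N, (F m + (|f x| - m) * c) ∂μ) := by
        gcongr
        rw [hline]
        exact le_add_of_nonneg_right (mul_nonneg (sub_nonneg.2 hm) hc)
    _ ≤ ∫⁻ x in N, ENNReal.ofReal (F m + (|f x| - m) * c) ∂μ :=
        ofReal_integral_le_lintegral_ofReal _
    _ ≤ ∫⁻ x in N, ENNReal.ofReal (F |f x|) ∂μ :=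
        lintegral_mono fun x => ENNReal.ofReal_le_ofReal (hF _ (abs_nonneg _))

namespace IsNFunction

variable {Φ Φ' : ℝ → ℝ} {D a : ℝ}

theorem deriv_nonneg (hΦ : IsNFunction Φ Φ') {t : ℝ} (ht : 0 ≤ t) : 0 ≤ Φ' t :=
  hΦ.deriv_zero.ge.trans (hΦ.deriv_mono self_mem_Ici ht ht)

theorem delta2_deriv (hΦ : IsNFunction Φ Φ') (hΔ : Delta2 Φ D) (hD : 0 ≤ D) :
    Delta2 Φ' (D ^ 2 / 2) := by
  intro s hs
  have hΦ_le : Φ s ≤ s * Φ' s := by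
    rw [hΦ.eq_integral s hs.le]
    exact hΦ.deriv_mono.integral_le_mul hs.le
  have hle_Φ : 2 * s * Φ' (2 * s) ≤ Φ (2 * (2 * s)) := by
    rw [hΦ.eq_integral _ (by positivity)]
    have := hΦ.deriv_mono.sub_mul_le_integral hΦ.deriv_zero.ge (by positivity : 0 ≤ 2 * s)
      (by linarith : 2 * s ≤ 2 * (2 * s))
    linarith
  have hchain : 2 * s * Φ' (2 * s) ≤ D ^ 2 * (s * Φ' s) :=
    calc 2 * s * Φ' (2 * s) ≤ Φ (2 * (2 * s)) := hle_Φ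
      _ ≤ D * Φ (2 * s) := hΔ _ (by positivity)
      _ ≤ D * (D * Φ s) := by gcongr; exact hΔ s hs
      _ ≤ D ^ 2 * (s * Φ' s) := by rw [← mul_assoc, ← sq]; gcongr
  exact le_of_mul_le_mul_left (by linear_combination hchain) (by positivity : 0 < 2 * s)

theorem shiftDeriv_monotoneOn (hΦ : IsNFunction Φ Φ') (ha : 0 ≤ a) :
    MonotoneOn (shiftDeriv Φ' a) (Ici 0) := by
  intro s hs t ht hst
  rw [mem_Ici] at hs ht
  have hq : s / (a + s) ≤ t / (a + t) := by
    rcases hs.eq_or_lt with rfl | hs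
    · simp only [add_zero, zero_div]
      positivity
    · rw [div_le_div_iff₀ (by linarith) (by linarith)]
      nlinarith
  exact mul_le_mul hq (hΦ.deriv_mono (by simp only [mem_Ici]; linarith)
    (by simp only [mem_Ici]; linarith) (by linarith)) (hΦ.deriv_nonneg (by linarith))
    (by positivity)

theorem shiftDeriv_nonneg (hΦ : IsNFunction Φ Φ') (ha : 0 ≤ a) {t : ℝ} (ht : 0 ≤ t) :
    0 ≤ shiftDeriv Φ' a t := by
  have := hΦ.shiftDeriv_monotoneOn ha self_mem_Ici ht ht
  simpa [shiftDeriv] using this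

theorem shiftN_monotoneOn (hΦ : IsNFunction Φ Φ') (ha : 0 ≤ a) :
    MonotoneOn (shiftN Φ' a) (Ici 0) := by
  intro s hs t ht hst
  have hline := (hΦ.shiftDeriv_monotoneOn ha).integral_add_sub_mul_le hs ht
  have hslope := mul_nonneg (sub_nonneg.2 hst) (hΦ.shiftDeriv_nonneg ha hs)
  unfold shiftN
  linarith

theorem delta2_shiftN (hΦ : IsNFunction Φ Φ') (hΔ : Delta2 Φ D) (hD : 0 ≤ D) (ha : 0 ≤ a) :
    Delta2 (shiftN Φ' a) (4 * D ^ 4) := by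
  intro t ht
  have hmono := hΦ.shiftDeriv_monotoneOn ha
  have hat : 0 < a + t := by linarith
  set P := Φ' ((a + t) / 2)
  have hP : Φ' (a + 2 * t) ≤ (D ^ 2 / 2) ^ 2 * P :=
    (hΦ.delta2_deriv hΔ hD).le_pow_mul (by positivity) hΦ.deriv_mono 2 (by positivity)
      (by linarith) (by positivity)
  have upper : shiftN Φ' a (2 * t) ≤ 4 * D ^ 4 * (t ^ 2 / (4 * (a + t)) * P) :=
    calc shiftN Φ' a (2 * t) ≤ 2 * t * shiftDeriv Φ' a (2 * t) :=
          hmono.integral_le_mul (by positivity)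
      _ = 2 * t * (2 * t / (a + 2 * t)) * Φ' (a + 2 * t) := by rw [shiftDeriv]; ring
      _ ≤ 2 * t * (2 * t / (a + t)) * ((D ^ 2 / 2) ^ 2 * P) :=
          mul_le_mul (by gcongr; linarith) hP (hΦ.deriv_nonneg (by positivity)) (by positivity)
      _ = 4 * D ^ 4 * (t ^ 2 / (4 * (a + t)) * P) := by field_simp
  have lower : t ^ 2 / (4 * (a + t)) * P ≤ shiftN Φ' a t :=
    calc t ^ 2 / (4 * (a + t)) * P = (t - t / 2) * (t / 2 / (a + t) * P) := by
          field_simp; ring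
      _ ≤ (t - t / 2) * (t / 2 / (a + t / 2) * Φ' (a + t / 2)) := by
          have hP_le : P ≤ Φ' (a + t / 2) :=
            hΦ.deriv_mono (by simp only [mem_Ici]; positivity) (by simp only [mem_Ici]; positivity)
              (by linarith)
          exact mul_le_mul_of_nonneg_left (mul_le_mul (by gcongr; linarith) hP_le
            (hΦ.deriv_nonneg (by positivity)) (by positivity)) (by linarith)
      _ ≤ shiftN Φ' a t :=
          hmono.sub_mul_le_integral (hΦ.shiftDeriv_nonneg ha le_rfl) (by positivity)
            (by linarith)
  exact upper.trans (by gcongr)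

theorem shiftN_le_pow_mul (hΦ : IsNFunction Φ Φ') (hΔ : Delta2 Φ D) (hD : 0 ≤ D) (ha : 0 ≤ a)
    (n : ℕ) {s m : ℝ} (hs : 0 ≤ s) (hm : 0 ≤ m) (hsm : s ≤ 2 ^ n * m) :
    shiftN Φ' a s ≤ (4 * D ^ 4) ^ n * shiftN Φ' a m := by
  rcases hm.eq_or_lt with rfl | hm
  · obtain rfl : s = 0 := le_antisymm (by simpa using hsm) hs
    simp [shiftN]
  · exact (hΦ.delta2_shiftN hΔ hD ha).le_pow_mul (by positivity) (hΦ.shiftN_monotoneOn ha) n hs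
      hsm hm

end IsNFunction

theorem statement10_general (D M M' : ℝ) (hD : 0 < D) (hM : 0 < M) :
    ∃ Cst : ℝ, 0 < Cst ∧
      ∀ (Φ Φ' : ℝ → ℝ),
        IsNFunction Φ Φ' →
        Delta2 Φ D →
        Delta2 (complementary Φ') D →
        ∀ (d : ℕ) (T N : Set (Fin d → ℝ)) (g f : (Fin d → ℝ) → ℝ),
          MeasurableSet T → MeasurableSet N → T ⊆ N →
          0 < volume T → volume N < ⊤ →
          Measurable g → Measurable f →
          IntegrableOn g T → IntegrableOn f N →
          (∀ᵐ x ∂volume.restrict T,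
            |g x| ≤ M * ((volume T).toReal⁻¹ * ∫ y in T, |g y|)) →
          ((volume T).toReal⁻¹ * ∫ y in T, |g y|) ≤
            M' * ((volume N).toReal⁻¹ * ∫ y in N, |f y|) →
          ∀ a : ℝ, 0 ≤ a →
            (∫⁻ x in T, ENNReal.ofReal (shiftN Φ' a |g x|)) / volume T ≤
              ENNReal.ofReal Cst *
                ((∫⁻ x in N, ENNReal.ofReal (shiftN Φ' a |f x|)) / volume N) := by
  obtain ⟨n, hn⟩ := pow_unbounded_of_one_lt (M * M') one_lt_two
  refine ⟨(4 * D ^ 4) ^ n, by positivity, ?_⟩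
  intro Φ Φ' hΦ hΔ _ d T N g f _ _ hTN hT0 hNfin _ _ _ hf hinv hmean a ha
  set m := (volume N).toReal⁻¹ * ∫ y in N, |f y|
  have hN0 : volume N ≠ 0 := (hT0.trans_le (measure_mono hTN)).ne'
  have hN0' : (volume N).toReal ≠ 0 := ENNReal.toReal_ne_zero.2 ⟨hN0, hNfin.ne⟩
  have hm0 : 0 ≤ m := by positivity
  have hm : m * volume.real N = ∫ y in N, |f y| := by
    rw [measureReal_def, mul_comm, mul_inv_cancel_left₀ hN0']
  have hpt : ∀ᵐ x ∂volume.restrict T, shiftN Φ' a |g x| ≤ (4 * D ^ 4) ^ n * shiftN Φ' a m := by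
    filter_upwards [hinv] with x hx
    refine hΦ.shiftN_le_pow_mul hΔ hD.le ha n (abs_nonneg _) hm0 ?_
    calc |g x| ≤ M * (M' * m) := hx.trans (by gcongr)
      _ ≤ 2 ^ n * m := by rw [← mul_assoc]; gcongr
  have hjensen : ENNReal.ofReal (shiftN Φ' a m) * volume N ≤
      ∫⁻ x in N, ENNReal.ofReal (shiftN Φ' a |f x|) :=
    ofReal_mul_measure_le_setLIntegral_of_supportingLine
      (fun t ht => (hΦ.shiftDeriv_monotoneOn ha).integral_add_sub_mul_le hm0 ht)
      (hΦ.shiftDeriv_nonneg ha hm0) hNfin.ne hf hm.le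
  calc (∫⁻ x in T, ENNReal.ofReal (shiftN Φ' a |g x|)) / volume T
      ≤ ENNReal.ofReal ((4 * D ^ 4) ^ n * shiftN Φ' a m) := setLIntegral_ofReal_div_le_of_ae_le hpt
    _ ≤ _ := by
        rw [ENNReal.ofReal_mul (by positivity)]
        gcongr
        exact (ENNReal.le_div_iff_mul_le (Or.inl hN0) (Or.inl hNfin.ne)).2 hjensen

/-- abstract orthotropic Orlicz stability: if `|g| ≤ M ⨍_T |g|`
a.e. on `T` (inverse estimate) and `⨍_T |g| ≤ M' ⨍_N |f|`, then
`⨍_T φ_a(|g|) ≤ C ⨍_N φ_a(|f|)` for all shifts `a ≥ 0`, with `C` depending only on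
`D, M, M'` (averages of `φ_a`-values taken in `[0,∞]`). -/
theorem statement10 (D M M' : ℝ) (hD : 0 < D) (hM : 0 < M) (hM' : 0 < M') :
    ∃ Cst : ℝ, 0 < Cst ∧
      ∀ (Φ Φ' : ℝ → ℝ),
        IsNFunction Φ Φ' →
        Delta2 Φ D →
        Delta2 (complementary Φ') D →
        ∀ (d : ℕ) (T N : Set (Fin d → ℝ)) (g f : (Fin d → ℝ) → ℝ),
          MeasurableSet T → MeasurableSet N → T ⊆ N →
          0 < volume T → volume N < ⊤ →
          Measurable g → Measurable f →
          IntegrableOn g T → IntegrableOn f N →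
          (∀ᵐ x ∂volume.restrict T,
            |g x| ≤ M * ((volume T).toReal⁻¹ * ∫ y in T, |g y|)) →
          ((volume T).toReal⁻¹ * ∫ y in T, |g y|) ≤
            M' * ((volume N).toReal⁻¹ * ∫ y in N, |f y|) →
          ∀ a : ℝ, 0 ≤ a →
            (∫⁻ x in T, ENNReal.ofReal (shiftN Φ' a |g x|)) / volume T ≤
              ENNReal.ofReal Cst *
                ((∫⁻ x in N, ENNReal.ofReal (shiftN Φ' a |f x|)) / volume N) :=
  statement10_general D M M' hD hM
end

section
/- Let p₁, p₂ ∈ (1,∞) and let q_i = p_i/(p_i − 1) be the Hölder conjugate exponents. Define u : ℝ² → ℝ by u(x₁, x₂) = |x₁|^{q₁}/q₁ − |x₂|^{q₂}/q₂. Then u is continuously differentiable on ℝ² with ∂₁u(x) = |x₁|^{q₁−1} sgn(x₁) and ∂₂u(x) = −|x₂|^{q₂−1} sgn(x₂); moreover, for every x ∈ ℝ² the orthotropic flux satisfies |∂₁u(x)|^{p₁−2} ∂₁u(x) = x₁ and |∂₂u(x)|^{p₂−2} ∂₂u(x) = −x₂, so that the flux field x ↦ (|∂₁u|^{p₁−2}∂₁u,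 |∂₂u|^{p₂−2}∂₂u)(x) = (x₁, −x₂) is smooth with vanishing divergence; in particular u solves the orthotropic p-Laplace equation −∂₁(|∂₁u|^{p₁−2}∂₁u) − ∂₂(|∂₂u|^{p₂−2}∂₂u) = 0 classically on ℝ². -/
open Real

lemma abs_rpow_hasDerivAt {q : ℝ} (hq : 1 < q) (t : ℝ) :
    HasDerivAt (fun s : ℝ => |s| ^ q) (q * (|t| ^ (q - 1) * Real.sign t)) t := by
  rcases lt_trichotomy t 0 with ht | rfl | ht
  · have h0 : HasDerivAt (fun s : ℝ => (-s) ^ q) (q * (-t) ^ (q - 1) * (-1)) t := by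
      have h1 := (Real.hasDerivAt_rpow_const (p := q) (x := -t)
        (Or.inl (by linarith))).comp t (hasDerivAt_neg t)
      exact h1.congr_deriv (by ring)
    have h2 : HasDerivAt (fun s : ℝ => |s| ^ q) (q * (-t) ^ (q - 1) * (-1)) t := by
      apply h0.congr_of_eventuallyEq
      filter_upwards [Iio_mem_nhds ht] with s hs
      rw [abs_of_neg hs]
    convert h2 using 1
    rw [Real.sign_of_neg ht, abs_of_neg ht]; ring
  · rw [Real.sign_zero, mul_zero, mul_zero]
    rw [hasDerivAt_iff_tendsto_slope]
    have habs : ∀ s : ℝ, s ≠ 0 → ‖slope (fun s : ℝ => |s| ^ q) 0 s‖ = |s| ^ (q - 1) := by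
      intro s hs
      have hs' : (0:ℝ) < |s| := abs_pos.mpr hs
      rw [slope_def_field, Real.norm_eq_abs, abs_zero, Real.zero_rpow (by linarith), sub_zero,
        sub_zero, abs_div, abs_of_nonneg (Real.rpow_nonneg (abs_nonneg s) q),
        ← Real.rpow_sub_one hs'.ne']
    have hlim : Filter.Tendsto (fun s : ℝ => |s| ^ (q - 1)) (nhdsWithin 0 {(0:ℝ)}ᶜ) (nhds 0) := by
      have : Filter.Tendsto (fun s : ℝ => |s| ^ (q - 1)) (nhds 0) (nhds (|(0:ℝ)| ^ (q - 1))) := by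
        apply ContinuousAt.tendsto
        exact (Real.continuousAt_rpow_const _ _ (Or.inr (by linarith))).comp
          continuous_abs.continuousAt
      rw [abs_zero, Real.zero_rpow (by linarith)] at this
      exact this.mono_left nhdsWithin_le_nhds
    apply squeeze_zero_norm' _ hlim
    filter_upwards [self_mem_nhdsWithin] with s hs
    exact le_of_eq (habs s hs)
  · have h0 : HasDerivAt (fun s : ℝ => s ^ q) (q * t ^ (q - 1)) t :=
      Real.hasDerivAt_rpow_const (Or.inl ht.ne')
    have h2 : HasDerivAt (fun s : ℝ => |s| ^ q) (q * t ^ (q - 1)) t := by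
      apply h0.congr_of_eventuallyEq
      filter_upwards [Ioi_mem_nhds ht] with s hs
      rw [abs_of_pos hs]
    convert h2 using 1
    rw [Real.sign_of_pos ht, abs_of_pos ht]; ring

lemma sign_rpow_cont {q : ℝ} (hq : 1 < q) :
    Continuous (fun t : ℝ => |t| ^ (q - 1) * Real.sign t) := by
  rw [continuous_iff_continuousAt]
  intro t
  rcases lt_trichotomy t 0 with ht | rfl | ht
  · have : ContinuousAt (fun s : ℝ => |s| ^ (q - 1) * (-1)) t :=
      (((Real.continuousAt_rpow_const _ _ (Or.inr (by linarith))).comp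
        continuous_abs.continuousAt).mul continuousAt_const)
    apply this.congr
    filter_upwards [Iio_mem_nhds ht] with s hs
    rw [Real.sign_of_neg hs]
  · unfold ContinuousAt
    have h00 : (fun t : ℝ => |t| ^ (q - 1) * Real.sign t) 0 = 0 := by simp
    rw [h00]
    apply squeeze_zero_norm (a := fun s : ℝ => |s| ^ (q - 1))
    · intro s
      rw [Real.norm_eq_abs, abs_mul, abs_of_nonneg (Real.rpow_nonneg (abs_nonneg s) _)]
      rcases lt_trichotomy s 0 with hs | rfl | hs
      · rw [Real.sign_of_neg hs]; simp
      · simp; positivity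
      · rw [Real.sign_of_pos hs]; simp
    · have : Filter.Tendsto (fun s : ℝ => |s| ^ (q - 1)) (nhds 0) (nhds (|(0:ℝ)| ^ (q - 1))) :=
        ContinuousAt.tendsto ((Real.continuousAt_rpow_const _ _ (Or.inr (by linarith))).comp
          continuous_abs.continuousAt)
      rwa [abs_zero, Real.zero_rpow (by linarith)] at this
  · have : ContinuousAt (fun s : ℝ => |s| ^ (q - 1) * 1) t :=
      (((Real.continuousAt_rpow_const _ _ (Or.inr (by linarith))).comp
        continuous_abs.continuousAt).mul continuousAt_const)
    apply this.congr
    filter_upwards [Ioi_mem_nhds ht] with s hs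
    rw [Real.sign_of_pos hs]

lemma abs_rpow_contDiff {q : ℝ} (hq : 1 < q) : ContDiff ℝ 1 (fun t : ℝ => |t| ^ q) := by
  rw [contDiff_one_iff_deriv]
  constructor
  · exact fun t => (abs_rpow_hasDerivAt hq t).differentiableAt
  · have : deriv (fun t : ℝ => |t| ^ q) = fun t => q * (|t| ^ (q - 1) * Real.sign t) := by
      funext t; exact (abs_rpow_hasDerivAt hq t).deriv
    rw [this]
    exact continuous_const.mul (sign_rpow_cont hq)

lemma flux_eq {p q : ℝ} (hp : 1 < p) (hq : q = p / (p - 1)) (s : ℝ) :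
    |(|s| ^ (q - 1) * Real.sign s)| ^ (p - 2) * (|s| ^ (q - 1) * Real.sign s) = s := by
  have hp1 : p - 1 ≠ 0 := by intro h; nlinarith
  have hkey : (q - 1) * (p - 1) = 1 := by
    rw [hq, div_sub_one hp1, div_mul_cancel₀ _ hp1]; ring
  rcases eq_or_ne s 0 with rfl | hs
  · simp
  · have hsa : (0:ℝ) < |s| := abs_pos.mpr hs
    have habs : |Real.sign s| = 1 := by
      rcases Real.sign_apply_eq_of_ne_zero s hs with h | h <;> rw [h] <;> simp
    rw [abs_mul, habs, mul_one, abs_of_nonneg (Real.rpow_nonneg (abs_nonneg s) _),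
      ← Real.rpow_mul (abs_nonneg s), ← mul_assoc, ← Real.rpow_add hsa]
    have : (q - 1) * (p - 2) + (q - 1) = 1 := by nlinarith
    rw [this, Real.rpow_one]
    rcases lt_or_gt_of_ne hs with h | h
    · rw [Real.sign_of_neg h, abs_of_neg h]; ring
    · rw [Real.sign_of_pos h, abs_of_pos h]; ring

/-- for `q_i = p_i/(p_i−1)`, the function
`u(x₁,x₂) = |x₁|^{q₁}/q₁ − |x₂|^{q₂}/q₂` is `C¹` with partial derivatives
`∂₁u = |x₁|^{q₁−1} sgn x₁` and `∂₂u = −|x₂|^{q₂−1} sgn x₂`, its orthotropic flux is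
`(x₁, −x₂)`, which is smooth with vanishing divergence; in particular `u` solves the
orthotropic p-Laplace equation classically on `ℝ²`. -/
theorem statement11 (p₁ p₂ q₁ q₂ : ℝ) (hp₁ : 1 < p₁) (hp₂ : 1 < p₂)
    (hq₁ : q₁ = p₁ / (p₁ - 1)) (hq₂ : q₂ = p₂ / (p₂ - 1))
    (u du₁ du₂ : ℝ × ℝ → ℝ)
    (hu : ∀ x : ℝ × ℝ, u x = |x.1| ^ q₁ / q₁ - |x.2| ^ q₂ / q₂)
    (hdu₁ : ∀ x : ℝ × ℝ, du₁ x = |x.1| ^ (q₁ - 1) * Real.sign x.1)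
    (hdu₂ : ∀ x : ℝ × ℝ, du₂ x = -(|x.2| ^ (q₂ - 1) * Real.sign x.2)) :
    ContDiff ℝ 1 u ∧
    (∀ x : ℝ × ℝ, HasDerivAt (fun t => u (t, x.2)) (du₁ x) x.1) ∧
    (∀ x : ℝ × ℝ, HasDerivAt (fun t => u (x.1, t)) (du₂ x) x.2) ∧
    (∀ x : ℝ × ℝ, |du₁ x| ^ (p₁ - 2) * du₁ x = x.1) ∧
    (∀ x : ℝ × ℝ, |du₂ x| ^ (p₂ - 2) * du₂ x = -x.2) ∧
    ContDiff ℝ (⊤ : ℕ∞) (fun x : ℝ × ℝ => (x.1, -x.2)) ∧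
    (∀ x : ℝ × ℝ,
      deriv (fun t => (|du₁ (t, x.2)| ^ (p₁ - 2) * du₁ (t, x.2))) x.1 +
        deriv (fun t => (|du₂ (x.1, t)| ^ (p₂ - 2) * du₂ (x.1, t))) x.2 = 0) := by
  have hq₁' : 1 < q₁ := by
    rw [hq₁]; rw [lt_div_iff₀ (by linarith)]; linarith
  have hq₂' : 1 < q₂ := by
    rw [hq₂]; rw [lt_div_iff₀ (by linarith)]; linarith
  have hq₁0 : q₁ ≠ 0 := by linarith
  have hq₂0 : q₂ ≠ 0 := by linarith
  have hueq : u = fun x : ℝ × ℝ => |x.1| ^ q₁ / q₁ - |x.2| ^ q₂ / q₂ := funext hu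
  -- partial derivatives
  have hdA : ∀ x : ℝ × ℝ, HasDerivAt (fun t => u (t, x.2)) (du₁ x) x.1 := by
    intro x
    have h1 : HasDerivAt (fun t : ℝ => |t| ^ q₁ / q₁ - |x.2| ^ q₂ / q₂)
        (q₁ * (|x.1| ^ (q₁ - 1) * Real.sign x.1) / q₁) x.1 :=
      ((abs_rpow_hasDerivAt hq₁' x.1).div_const q₁).sub_const _
    have h2 : q₁ * (|x.1| ^ (q₁ - 1) * Real.sign x.1) / q₁ = du₁ x := by
      rw [hdu₁]; field_simp
    rw [h2] at h1
    apply h1.congr_of_eventuallyEq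
    filter_upwards with t
    rw [hu]
  have hdB : ∀ x : ℝ × ℝ, HasDerivAt (fun t => u (x.1, t)) (du₂ x) x.2 := by
    intro x
    have h1 : HasDerivAt (fun t : ℝ => |x.1| ^ q₁ / q₁ - |t| ^ q₂ / q₂)
        (-(q₂ * (|x.2| ^ (q₂ - 1) * Real.sign x.2) / q₂)) x.2 :=
      (((abs_rpow_hasDerivAt hq₂' x.2).div_const q₂).const_sub _)
    have h2 : -(q₂ * (|x.2| ^ (q₂ - 1) * Real.sign x.2) / q₂) = du₂ x := by
      rw [hdu₂]; field_simp
    rw [h2] at h1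
    apply h1.congr_of_eventuallyEq
    filter_upwards with t
    rw [hu]
  have hflux1 : ∀ x : ℝ × ℝ, |du₁ x| ^ (p₁ - 2) * du₁ x = x.1 := by
    intro x; rw [hdu₁]; exact flux_eq hp₁ hq₁ x.1
  have hflux2 : ∀ x : ℝ × ℝ, |du₂ x| ^ (p₂ - 2) * du₂ x = -x.2 := by
    intro x; rw [hdu₂, abs_neg, mul_neg]
    rw [flux_eq hp₂ hq₂ x.2]
  refine ⟨?_, hdA, hdB, hflux1, hflux2, ?_, ?_⟩
  · rw [hueq]
    exact (((abs_rpow_contDiff hq₁').comp contDiff_fst).div_const q₁).sub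
      (((abs_rpow_contDiff hq₂').comp contDiff_snd).div_const q₂)
  · exact contDiff_fst.prodMk contDiff_snd.neg
  · intro x
    have e1 : (fun t => (|du₁ (t, x.2)| ^ (p₁ - 2) * du₁ (t, x.2))) = fun t : ℝ => t := by
      funext t; exact hflux1 (t, x.2)
    have e2 : (fun t => (|du₂ (x.1, t)| ^ (p₂ - 2) * du₂ (x.1, t))) = fun t : ℝ => -t := by
      funext t; exact hflux2 (x.1, t)
    rw [e1, e2, deriv_id'', deriv_neg]
    ring
end

section
/- Let Φ be an N-function that is C² on (0,∞) and uniformly convex with constants 0 < c ≤ C. Then the shifted N-functions are uniformly convex, uniformly in the shift: there exist constants 0 < c' ≤ C', depending only on c and C, such that for all a ≥ 0 and all t > 0: c' Φ_a'(t) ≤ t Φ_a''(t) ≤ C' Φ_a'(t), where Φ_a'(t) = (t/(a+t)) Φ'(a+t) and Φ_a'' is its derivative in t. -/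
open MeasureTheory

/-- Uniform convexity with constants `c ≤ C`: `c Φ'(t) ≤ t Φ''(t) ≤ C Φ'(t)` for `t > 0`. -/
def UniformlyConvex (Φ' Φ'' : ℝ → ℝ) (c C : ℝ) : Prop :=
  ∀ t : ℝ, 0 < t → c * Φ' t ≤ t * Φ'' t ∧ t * Φ'' t ≤ C * Φ' t

/-!
With `s = a + t`, the product rule gives
`t Φ_a''(t) = Φ_a'(t) · (a/s · 1 + t/s · sΦ''(s)/Φ'(s))`.
The bracket is a convex combination of `1` and of `sΦ''(s)/Φ'(s) ∈ [c, C]`,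
so it lies in `[min c 1, max C 1]` whatever the shift `a ≥ 0`.
-/

theorem HasDerivAt.shiftDeriv {Φ' : ℝ → ℝ} {a t q : ℝ} (hs : a + t ≠ 0)
    (h : HasDerivAt Φ' q (a + t)) :
    HasDerivAt (shiftDeriv Φ' a) (a / (a + t) ^ 2 * Φ' (a + t) + t / (a + t) * q) t := by
  have hquot : HasDerivAt (fun t : ℝ => t / (a + t)) (a / (a + t) ^ 2) t := by
    refine ((hasDerivAt_id t).div ((hasDerivAt_id t).const_add a) hs).congr_deriv ?_
    simp only [id]
    ring
  exact hquot.mul h.comp_const_add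

theorem mul_deriv_shiftDeriv_eq (Φ' : ℝ → ℝ) {a t : ℝ} (q : ℝ) (hs : a + t ≠ 0) :
    t * (a / (a + t) ^ 2 * Φ' (a + t) + t / (a + t) * q) =
      t / (a + t) * (a / (a + t) * Φ' (a + t) + t / (a + t) * ((a + t) * q)) := by
  field_simp

theorem min_mul_le_combo {α β c x y : ℝ} (hα : 0 ≤ α) (hβ : 0 ≤ β) (hαβ : α + β = 1)
    (hx : 0 ≤ x) (hy : c * x ≤ y) : min c 1 * x ≤ α * x + β * y :=
  calc min c 1 * x = min (c * x) x := by rw [min_mul_of_nonneg _ _ hx, one_mul]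
    _ ≤ min x y := by rw [min_comm]; exact min_le_min le_rfl hy
    _ ≤ α * x + β * y := Convex.min_le_combo x y hα hβ hαβ

theorem combo_le_max_mul {α β C x y : ℝ} (hα : 0 ≤ α) (hβ : 0 ≤ β) (hαβ : α + β = 1)
    (hx : 0 ≤ x) (hy : y ≤ C * x) : α * x + β * y ≤ max C 1 * x :=
  calc α * x + β * y ≤ max x y := Convex.combo_le_max x y hα hβ hαβ
    _ ≤ max (C * x) x := by rw [max_comm x y]; exact max_le_max hy le_rfl
    _ = max C 1 * x := by rw [max_mul_of_nonneg _ _ hx, one_mul]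

/-- the shifted N-functions of a uniformly convex N-function are
uniformly convex, uniformly in the shift: `c' Φ_a'(t) ≤ t Φ_a''(t) ≤ C' Φ_a'(t)` for
all `a ≥ 0`, `t > 0`, with `c', C'` depending only on `c, C`. -/
theorem statement17 (c C : ℝ) (hc : 0 < c) (hcC : c ≤ C) :
    ∃ c' C' : ℝ, 0 < c' ∧ c' ≤ C' ∧
      ∀ (Φ Φ' Φ'' : ℝ → ℝ),
        IsNFunction Φ Φ' →
        ContDiffOn ℝ 2 Φ (Set.Ioi 0) →
        (∀ t : ℝ, 0 < t → HasDerivAt Φ (Φ' t) t) →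
        (∀ t : ℝ, 0 < t → HasDerivAt Φ' (Φ'' t) t) →
        UniformlyConvex Φ' Φ'' c C →
        ∀ a : ℝ, 0 ≤ a →
          ∃ sd'' : ℝ → ℝ,
            (∀ t : ℝ, 0 < t → HasDerivAt (shiftDeriv Φ' a) (sd'' t) t) ∧
            ∀ t : ℝ, 0 < t →
              c' * shiftDeriv Φ' a t ≤ t * sd'' t ∧ t * sd'' t ≤ C' * shiftDeriv Φ' a t := by
  refine ⟨min c 1, max C 1, lt_min hc one_pos,
    (min_le_left _ _).trans (hcC.trans (le_max_left _ _)), ?_⟩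
  intro Φ Φ' Φ'' hN _ _ hΦ'' huc a ha
  refine ⟨fun t => a / (a + t) ^ 2 * Φ' (a + t) + t / (a + t) * Φ'' (a + t),
    fun t ht => (hΦ'' _ (by linarith)).shiftDeriv (by linarith), fun t ht => ?_⟩
  have hs : 0 < a + t := by linarith
  have hP : 0 ≤ Φ' (a + t) := (hN.deriv_pos _ hs).le
  have hweights : a / (a + t) + t / (a + t) = 1 := by field_simp
  have hα : 0 ≤ a / (a + t) := by positivity
  have hβ : 0 ≤ t / (a + t) := by positivity
  obtain ⟨hlower, hupper⟩ := huc (a + t) hs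
  simp only [mul_deriv_shiftDeriv_eq Φ' _ hs.ne', shiftDeriv, mul_left_comm (min c 1),
    mul_left_comm (max C 1)]
  exact ⟨mul_le_mul_of_nonneg_left (min_mul_le_combo hα hβ hweights hP hlower) hβ,
    mul_le_mul_of_nonneg_left (combo_le_max_mul hα hβ hweights hP hupper) hβ⟩
end
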